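/- Let γ ∈ (0,1]. For every initial state α = (α_1,…,α_n,l) of the PI-Split chain such that at least two coordinates α_i with i ≠ l are zero and max_{1≤i≤n} α_i ≥ s_max, one has E_α[ Σ_{i=1}^n Q^S_i(1)^{1+γ} ] − Σ_{i=1}^n α_i^{1+γ} ≤ −(max_{1≤i≤n} α_i)^γ + n·(σ_a² + λ²). -/

import Mathlib

open MeasureTheory ENNReal Filter ProbabilityTheory

namespace PISplit

/-- The state space of the PI-Split chain: queue lengths and identity of the Last-Idle server. -/
abbrev State (n : ℕ) := (Fin n → ℕ) × Fin n

/-- The set of idle servers for the queue-length vector `q`. -/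
def idleSet {n : ℕ} (q : Fin n → ℕ) : Finset (Fin n) := Finset.univ.filter (fun i => q i = 0)

/-- One step of the PI-Split dynamics.  If some server is idle, the batch is split among the
idle servers according to the splitting rule `f` (evaluated at the current queue lengths, the
batch size and the splitting randomization `b`) and the new Last-Idle server is chosen
uniformly among the idle servers (via `choice` applied to the uniform noise `u`); otherwise the
whole batch joins the queue of the Last-Idle server.  Then every server serves up to its
capacity (`ℕ`-subtraction is truncated, realizing the positive part `[·]⁺`). -/
def step {n : ℕ} (choice : Finset (Fin n) → ℝ → Fin n)
    (f : (Fin n → ℕ) → ℕ → ℝ → (Fin n → ℕ))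
    (x : State n) (batch : ℕ) (svc : Fin n → ℕ) (u : ℝ) (b : ℝ) : State n :=
  if (idleSet x.1).Nonempty then
    (fun i => x.1 i + f x.1 batch b i - svc i, choice (idleSet x.1) u)
  else
    (fun i => x.1 i + (if x.2 = i then batch else 0) - svc i, x.2)

/-- The PI-Split trajectory `X^S = (Q^S, LI^S)` started from `α`; the step from time `t` to
`t+1` (i.e. time slot `t+1`) uses the noise of index `t`. -/
def traj {n : ℕ} {Ω : Type} (choice : Finset (Fin n) → ℝ → Fin n)
    (f : (Fin n → ℕ) → ℕ → ℝ → (Fin n → ℕ))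
    (a : ℕ → Ω → ℕ) (s : Fin n → ℕ → Ω → ℕ) (U : ℕ → Ω → ℝ) (B : ℕ → Ω → ℝ)
    (α : State n) : ℕ → Ω → State n
  | 0 => fun _ => α
  | (t+1) => fun ω =>
      step choice f (traj choice f a s U B α t ω) (a t ω) (fun i => s i t ω) (U t ω) (B t ω)

/-- Index type for the driving noise: arrivals, services, tie-breaking uniforms, and
splitting randomization. -/
def NoiseIdx (n : ℕ) := ((ℕ ⊕ (Fin n × ℕ)) ⊕ ℕ) ⊕ ℕ

/-- Value type of each noise coordinate. -/
def NoiseType {n : ℕ} : NoiseIdx n → Type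
  | .inl (.inl (.inl _)) => ℕ
  | .inl (.inl (.inr _)) => ℕ
  | .inl (.inr _) => ℝ
  | .inr _ => ℝ

instance {n : ℕ} : ∀ k : NoiseIdx n, MeasurableSpace (NoiseType k)
  | .inl (.inl (.inl _)) => inferInstanceAs (MeasurableSpace ℕ)
  | .inl (.inl (.inr _)) => inferInstanceAs (MeasurableSpace ℕ)
  | .inl (.inr _) => inferInstanceAs (MeasurableSpace ℝ)
  | .inr _ => inferInstanceAs (MeasurableSpace ℝ)

/-- The combined noise family. -/
def noise {n : ℕ} {Ω : Type} (a : ℕ → Ω → ℕ) (s : Fin n → ℕ → Ω → ℕ)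
    (U : ℕ → Ω → ℝ) (B : ℕ → Ω → ℝ) : ∀ k : NoiseIdx n, Ω → NoiseType k
  | .inl (.inl (.inl t)) => a t
  | .inl (.inl (.inr p)) => s p.1 p.2
  | .inl (.inr t) => U t
  | .inr t => B t

/-- The empty state with Last-Idle server `i`. -/
def emptyState {n : ℕ} (i : Fin n) : State n := (fun _ => 0, i)

/-- First time `t ≥ 1` at which the process `X` lies in `B` (with value `∞ ∈ ℝ≥0∞`
if this never happens). -/
noncomputable def hitTime {n : ℕ} {Ω : Type} (X : ℕ → Ω → State n)
    (B : Set (State n)) (ω : Ω) : ℝ≥0∞ :=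
  sInf {x : ℝ≥0∞ | ∃ t : ℕ, 1 ≤ t ∧ X t ω ∈ B ∧ x = (t : ℝ≥0∞)}

end PISplit

/-! When some server is idle, the splitting rule sends the whole batch to idle servers, so a
server `j` with the longest queue `α_j = max α ≥ s_max ≥ 1` receives nothing and serves at least
one job; since `(m - 1) ^ (1 + γ) ≤ (m - 1) * m ^ γ`, its term `α_j ^ (1 + γ)` drops by at least
`α_j ^ γ`. Every other queue ends at most at `α_i` (busy) or at its share `F_i` of the batch
(idle), and `∑ F_i ^ 2 ≤ a(1) ^ 2`. So pointwise the drift is at most `-(max α) ^ γ + a(1) ^ 2`,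
and `E a(1) ^ 2 = λ ^ 2 + σ_a ^ 2 ≤ n (σ_a ^ 2 + λ ^ 2)`. -/

namespace ENNReal

lemma natCast_rpow_le_sq {p : ℝ} (hp0 : 0 < p) (hp2 : p ≤ 2) (k : ℕ) :
    (k : ℝ≥0∞) ^ p ≤ (k : ℝ≥0∞) ^ 2 := by
  rcases Nat.eq_zero_or_pos k with rfl | hk
  · simp [zero_rpow_of_pos hp0]
  · rw [← rpow_natCast]
    exact rpow_le_rpow_of_exponent_le (by exact_mod_cast hk) (by norm_num [hp2])

lemma natCast_add_sub_rpow_le {q F c : ℕ} (hqF : q = 0 ∨ F = 0) {p : ℝ} (hp0 : 0 < p)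
    (hp2 : p ≤ 2) : ((q + F - c : ℕ) : ℝ≥0∞) ^ p ≤ (q : ℝ≥0∞) ^ p + (F : ℝ≥0∞) ^ 2 := by
  rcases hqF with rfl | rfl
  · calc ((0 + F - c : ℕ) : ℝ≥0∞) ^ p ≤ (F : ℝ≥0∞) ^ p :=
          rpow_le_rpow (by exact_mod_cast (by omega : 0 + F - c ≤ F)) hp0.le
      _ ≤ (F : ℝ≥0∞) ^ 2 := natCast_rpow_le_sq hp0 hp2 F
      _ ≤ _ := le_add_self
  · calc ((q + 0 - c : ℕ) : ℝ≥0∞) ^ p ≤ (q : ℝ≥0∞) ^ p :=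
          rpow_le_rpow (by exact_mod_cast (by omega : q + 0 - c ≤ q)) hp0.le
      _ ≤ _ := le_self_add

lemma natCast_sub_rpow_add_rpow_le {m c : ℕ} (hm : m ≠ 0) (hc : 1 ≤ c) {γ : ℝ} (hγ : 0 ≤ γ) :
    ((m - c : ℕ) : ℝ≥0∞) ^ (1 + γ) + (m : ℝ≥0∞) ^ γ ≤ (m : ℝ≥0∞) ^ (1 + γ) := by
  have hle : ((m - c : ℕ) : ℝ≥0∞) ≤ m := by exact_mod_cast Nat.sub_le m c
  calc ((m - c : ℕ) : ℝ≥0∞) ^ (1 + γ) + (m : ℝ≥0∞) ^ γ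
      = ((m - c : ℕ) : ℝ≥0∞) * ((m - c : ℕ) : ℝ≥0∞) ^ γ + (m : ℝ≥0∞) ^ γ := by
        rw [rpow_add_of_nonneg 1 γ zero_le_one hγ, rpow_one]
    _ ≤ ((m - c : ℕ) : ℝ≥0∞) * (m : ℝ≥0∞) ^ γ + 1 * (m : ℝ≥0∞) ^ γ := by
        rw [one_mul]; gcongr
    _ = ((m - c + 1 : ℕ) : ℝ≥0∞) * (m : ℝ≥0∞) ^ γ := by push_cast; ring
    _ ≤ (m : ℝ≥0∞) * (m : ℝ≥0∞) ^ γ := by gcongr; omega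
    _ = (m : ℝ≥0∞) ^ (1 + γ) := by rw [rpow_add_of_nonneg 1 γ zero_le_one hγ, rpow_one]

end ENNReal

lemma Finset.sum_add_le_sum_of_le {ι M : Type*} [AddCommMonoid M] [PartialOrder M]
    [IsOrderedAddMonoid M] {s : Finset ι} {u v : ι → M} {j : ι} (hj : j ∈ s) {c : M}
    (h : ∀ i ∈ s, u i ≤ v i) (hjc : u j + c ≤ v j) : ∑ i ∈ s, u i + c ≤ ∑ i ∈ s, v i := by
  classical
  rw [← Finset.add_sum_erase s u hj, ← Finset.add_sum_erase s v hj, add_right_comm]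
  exact add_le_add hjc (Finset.sum_le_sum fun i hi => h i (Finset.mem_of_mem_erase hi))

namespace PISplit

open ENNReal

variable {n : ℕ} {choice : Finset (Fin n) → ℝ → Fin n} {f : (Fin n → ℕ) → ℕ → ℝ → (Fin n → ℕ)}
  {x : State n} {batch : ℕ} {svc : Fin n → ℕ} {u b : ℝ}

lemma step_fst_of_nonempty (h : (idleSet x.1).Nonempty) :
    (step choice f x batch svc u b).1 = fun i => x.1 i + f x.1 batch b i - svc i := by
  rw [step, if_pos h]

lemma sum_step_rpow_add_rpow_le (h : (idleSet x.1).Nonempty)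
    (hsum : ∑ i, f x.1 batch b i = batch) (hbusy : ∀ i, x.1 i ≠ 0 → f x.1 batch b i = 0)
    {j : Fin n} (hj : x.1 j ≠ 0) (hsvc : 1 ≤ svc j) {γ : ℝ} (hγ0 : 0 < γ) (hγ1 : γ ≤ 1) :
    ∑ i, ((step choice f x batch svc u b).1 i : ℝ≥0∞) ^ (1 + γ) + (x.1 j : ℝ≥0∞) ^ γ
      ≤ ∑ i, (x.1 i : ℝ≥0∞) ^ (1 + γ) + (batch : ℝ≥0∞) ^ 2 := by
  have hsq : ∑ i, (f x.1 batch b i : ℝ≥0∞) ^ 2 ≤ (batch : ℝ≥0∞) ^ 2 := by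
    calc ∑ i, (f x.1 batch b i : ℝ≥0∞) ^ 2 ≤ (∑ i, (f x.1 batch b i : ℝ≥0∞)) ^ 2 :=
          Finset.sum_sq_le_sq_sum_of_nonneg fun _ _ => bot_le
      _ = (batch : ℝ≥0∞) ^ 2 := by rw [← Nat.cast_sum, hsum]
  rw [step_fst_of_nonempty h]
  refine le_trans ?_ (add_le_add le_rfl hsq)
  rw [← Finset.sum_add_distrib]
  refine Finset.sum_add_le_sum_of_le (Finset.mem_univ j) (fun i _ => ?_) ?_
  · refine natCast_add_sub_rpow_le ?_ (by linarith) (by linarith)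
    by_cases hi : x.1 i = 0
    exacts [.inl hi, .inr (hbusy i hi)]
  · simp only [hbusy j hj, add_zero]
    exact (natCast_sub_rpow_add_rpow_le hj hsvc hγ0.le).trans le_self_add

end PISplit

theorem piSplit_one_step_drift_general
    {n : ℕ} {Ω : Type} [MeasurableSpace Ω]
    (P : PISplit.State n → Measure Ω) (hP : ∀ α, IsProbabilityMeasure (P α))
    (a : ℕ → Ω → ℕ) (s : Fin n → ℕ → Ω → ℕ) (U : ℕ → Ω → ℝ) (B : ℕ → Ω → ℝ)
    (choice : Finset (Fin n) → ℝ → Fin n)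
    (f : (Fin n → ℕ) → ℕ → ℝ → (Fin n → ℕ))
    (νa : Measure ℕ) (νs : Fin n → Measure ℕ)
    (lam σa : ℝ) (smax : ℕ)
    (ha_meas : ∀ t, Measurable (a t)) (hs_meas : ∀ i t, Measurable (s i t))
    (hf_sum : ∀ q batch b, ∑ i, f q batch b i = batch)
    (hf_idle : ∀ q batch b i, (∃ j, q j = 0) → q i ≠ 0 → f q batch b i = 0)
    (ha_law : ∀ α t, Measure.map (a t) (P α) = νa)
    (hs_law : ∀ α i t, Measure.map (s i t) (P α) = νs i)
    (ha_var : ∫⁻ k, ((k : ℝ≥0∞)) ^ 2 ∂νa = ENNReal.ofReal (lam ^ 2 + σa ^ 2))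
    (hs_bdd : ∀ i, (νs i) {k : ℕ | ¬(1 ≤ k ∧ k ≤ smax)} = 0) :
    ∀ X : PISplit.State n → ℕ → Ω → PISplit.State n,
      X = PISplit.traj choice f a s U B →
    ∀ γ : ℝ, 0 < γ → γ ≤ 1 →
    ∀ α : PISplit.State n,
      (∃ i j : Fin n, i ≠ j ∧ i ≠ α.2 ∧ j ≠ α.2 ∧ α.1 i = 0 ∧ α.1 j = 0) →
      smax ≤ Finset.univ.sup α.1 →
      ∫⁻ ω, ∑ i, ((X α 1 ω).1 i : ℝ≥0∞) ^ ((1 : ℝ) + γ) ∂(P α)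
          + ((Finset.univ.sup α.1 : ℕ) : ℝ≥0∞) ^ γ
        ≤ ∑ i, (α.1 i : ℝ≥0∞) ^ ((1 : ℝ) + γ)
          + ENNReal.ofReal ((n : ℝ) * (σa ^ 2 + lam ^ 2)) := by
  rintro X rfl γ hγ0 hγ1 α ⟨i₀, -, -, -, -, hi₀, -⟩ hsmax
  have := hP α
  obtain ⟨j, -, hj⟩ := Finset.exists_mem_eq_sup Finset.univ ⟨i₀, Finset.mem_univ _⟩ α.1
  have hservice : ∀ᵐ ω ∂P α, 1 ≤ s j 0 ω ∧ s j 0 ω ≤ smax :=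
    ae_of_ae_map (hs_meas j 0).aemeasurable (by rw [hs_law α j 0]; exact ae_iff.mpr (hs_bdd j))
  have hbusy : α.1 j ≠ 0 := by
    obtain ⟨ω, hs1, hs2⟩ := hservice.exists
    omega
  have hdrift : ∀ᵐ ω ∂P α,
      ∑ i, ((PISplit.traj choice f a s U B α 1 ω).1 i : ℝ≥0∞) ^ ((1 : ℝ) + γ)
          + ((Finset.univ.sup α.1 : ℕ) : ℝ≥0∞) ^ γ
        ≤ ∑ i, (α.1 i : ℝ≥0∞) ^ ((1 : ℝ) + γ) + (a 0 ω : ℝ≥0∞) ^ 2 :=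
    hservice.mono fun ω hω => hj ▸
      PISplit.sum_step_rpow_add_rpow_le ⟨i₀, by simp [PISplit.idleSet, hi₀]⟩
        (hf_sum _ _ _) (hf_idle _ _ _ · ⟨i₀, hi₀⟩) hbusy hω.1 hγ0 hγ1
  have hsecond : ∫⁻ ω, (a 0 ω : ℝ≥0∞) ^ 2 ∂P α = ENNReal.ofReal (lam ^ 2 + σa ^ 2) := by
    rw [← ha_var, ← ha_law α 0, lintegral_map (by fun_prop) (ha_meas 0)]
  have hn : (1 : ℝ) ≤ n := by exact_mod_cast i₀.pos
  calc _ = ∫⁻ ω, (∑ i, ((PISplit.traj choice f a s U B α 1 ω).1 i : ℝ≥0∞) ^ ((1 : ℝ) + γ)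
          + ((Finset.univ.sup α.1 : ℕ) : ℝ≥0∞) ^ γ) ∂P α := by
        rw [lintegral_add_right _ measurable_const, lintegral_const, measure_univ, mul_one]
    _ ≤ ∫⁻ ω, (∑ i, (α.1 i : ℝ≥0∞) ^ ((1 : ℝ) + γ) + (a 0 ω : ℝ≥0∞) ^ 2) ∂P α :=
        lintegral_mono_ae hdrift
    _ = ∑ i, (α.1 i : ℝ≥0∞) ^ ((1 : ℝ) + γ) + ENNReal.ofReal (lam ^ 2 + σa ^ 2) := by
        rw [lintegral_add_left measurable_const, lintegral_const, measure_univ, mul_one,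
          hsecond]
    _ ≤ _ := by
        gcongr
        rw [add_comm]
        exact le_mul_of_one_le_left (by positivity) hn

/-- **One-step drift bound for PI-Split** (eq. (Split leave one)).  Let `γ ∈ (0,1]`.  For
every initial state `α = (α_1,…,α_n,l)` of the PI-Split chain such that at least two
coordinates `α_i` with `i ≠ l` vanish and `max_i α_i ≥ s_max`, one has
`E_α [∑ i, Q^S_i(1)^(1+γ)] − ∑ i, α_i^(1+γ) ≤ −(max_i α_i)^γ + n (σ_a² + λ²)`, stated here in
the (equivalent) rearranged form with all terms nonnegative and values in `[0,∞]`. -/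
theorem piSplit_one_step_drift
    {n : ℕ} (hn : 2 ≤ n) {Ω : Type} [MeasurableSpace Ω]
    (P : PISplit.State n → Measure Ω) (hP : ∀ α, IsProbabilityMeasure (P α))
    (a : ℕ → Ω → ℕ) (s : Fin n → ℕ → Ω → ℕ) (U : ℕ → Ω → ℝ) (B : ℕ → Ω → ℝ)
    (choice : Finset (Fin n) → ℝ → Fin n)
    (f : (Fin n → ℕ) → ℕ → ℝ → (Fin n → ℕ))
    (νa : Measure ℕ) (νs : Fin n → Measure ℕ) (νB : Measure ℝ)
    (lam σa : ℝ) (μ : Fin n → ℝ) (smax : ℕ)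
    (ha_meas : ∀ t, Measurable (a t)) (hs_meas : ∀ i t, Measurable (s i t))
    (hU_meas : ∀ t, Measurable (U t)) (hB_meas : ∀ t, Measurable (B t))
    (hchoice_meas : ∀ I, Measurable (choice I))
    (hf_sum : ∀ q batch b, ∑ i, f q batch b i = batch)
    (hf_idle : ∀ q batch b i, (∃ j, q j = 0) → q i ≠ 0 → f q batch b i = 0)
    (ha_law : ∀ α t, Measure.map (a t) (P α) = νa)
    (hs_law : ∀ α i t, Measure.map (s i t) (P α) = νs i)
    (hU_law : ∀ α t, Measure.map (U t) (P α) = volume.restrict (Set.Icc (0:ℝ) 1))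
    (hB_law : ∀ α t, Measure.map (B t) (P α) = νB) (hνB : IsProbabilityMeasure νB)
    (hindep : ∀ α, iIndepFun (PISplit.noise a s U B) (P α))
    (ha0 : νa {0} ≠ 0)
    (ha_mean : ∫⁻ k, (k : ℝ≥0∞) ∂νa = ENNReal.ofReal lam)
    (ha_var : ∫⁻ k, ((k : ℝ≥0∞)) ^ 2 ∂νa = ENNReal.ofReal (lam ^ 2 + σa ^ 2))
    (hs_bdd : ∀ i, (νs i) {k : ℕ | ¬(1 ≤ k ∧ k ≤ smax)} = 0)
    (hs_mean : ∀ i, ∫⁻ k, (k : ℝ≥0∞) ∂(νs i) = ENNReal.ofReal (μ i))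
    (hchoice_unif : ∀ I : Finset (Fin n), I.Nonempty → ∀ i ∈ I,
      (volume.restrict (Set.Icc (0:ℝ) 1)) {u | choice I u = i} = (I.card : ℝ≥0∞)⁻¹) :
    ∀ X : PISplit.State n → ℕ → Ω → PISplit.State n,
      X = PISplit.traj choice f a s U B →
    ∀ γ : ℝ, 0 < γ → γ ≤ 1 →
    ∀ α : PISplit.State n,
      (∃ i j : Fin n, i ≠ j ∧ i ≠ α.2 ∧ j ≠ α.2 ∧ α.1 i = 0 ∧ α.1 j = 0) →
      smax ≤ Finset.univ.sup α.1 →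
      ∫⁻ ω, ∑ i, ((X α 1 ω).1 i : ℝ≥0∞) ^ ((1 : ℝ) + γ) ∂(P α)
          + ((Finset.univ.sup α.1 : ℕ) : ℝ≥0∞) ^ γ
        ≤ ∑ i, (α.1 i : ℝ≥0∞) ^ ((1 : ℝ) + γ)
          + ENNReal.ofReal ((n : ℝ) * (σa ^ 2 + lam ^ 2)) :=
  piSplit_one_step_drift_general P hP a s U B choice f νa νs lam σa smax ha_meas hs_meas hf_sum
    hf_idle ha_law hs_law ha_var hs_bdd
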